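/- Let n ≥ 2, let I ⊆ {1,…,n} be nonempty, let p ≥ 1, and let J^0, …, J^{p−1} be pairwise disjoint nonempty subsets of {1,…,n} \ I. Define G^t = S_{n, J^{t mod p}} for t ≥ 0. Then for any t ≥ 0 and R ≥ 1, the iterated neighborhood satisfies: N_{G^t}(N_{G^{t+1}}(⋯ N_{G^{t+R−1}}(I) ⋯)) = (⋃_{t'=t}^{t+R−1} J^{t' mod p}) ∪ I if R ≤ p, and it equals {1,…,n} if R ≥ p + 1. -/

import Mathlib

set_option autoImplicit false
set_option maxHeartbeats 1000000

open Matrix MeasureTheory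

noncomputable section

/-- The all-ones vector in `ℝ^n`. -/
def onesVec (n : ℕ) : Fin n → ℝ := fun _ => 1

/-- The all-ones `n × n` matrix `𝟙𝟙ᵀ`. -/
def onesMat (n : ℕ) : Matrix (Fin n) (Fin n) ℝ := Matrix.of fun _ _ => (1 : ℝ)

/-- The averaging matrix `(1/n)𝟙𝟙ᵀ`. -/
def avgMat (n : ℕ) : Matrix (Fin n) (Fin n) ℝ := (n : ℝ)⁻¹ • onesMat n

/-- Spectral norm (largest singular value) of a real matrix. -/
def specNorm {m n : ℕ} (M : Matrix (Fin m) (Fin n) ℝ) : ℝ :=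
  ‖(Matrix.toEuclideanLin (𝕜 := ℝ) M).toContinuousLinearMap‖

/-- Frobenius norm of a real matrix. -/
def frobNorm {m n : ℕ} (M : Matrix (Fin m) (Fin n) ℝ) : ℝ :=
  Real.sqrt (∑ i, ∑ j, (M i j) ^ 2)

/-- The weight-matrix class `W_{n,β}`. -/
def memW (n : ℕ) (β : ℝ) (W : Matrix (Fin n) (Fin n) ℝ) : Prop :=
  W *ᵥ onesVec n = onesVec n ∧ onesVec n ᵥ* W = onesVec n ∧
    specNorm (W - avgMat n) ≤ β

/-- The sun-shaped graph `S_{n,C}`. -/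
def sunGraph (n : ℕ) (C : Finset (Fin n)) : SimpleGraph (Fin n) where
  Adj i j := i ≠ j ∧ (i ∈ C ∨ j ∈ C)
  symm := by
    constructor
    intro i j h
    exact ⟨fun hej => h.1 hej.symm, h.2.symm⟩
  loopless := by constructor; intro i h; exact h.1 rfl

instance (n : ℕ) (C : Finset (Fin n)) : DecidableRel (sunGraph n C).Adj :=
  fun i j => inferInstanceAs (Decidable (i ≠ j ∧ (i ∈ C ∨ j ∈ C)))

/-- One-step neighborhood `N_G(I)` (including `I` itself). -/
def nbhd {n : ℕ} (G : SimpleGraph (Fin n)) (I : Set (Fin n)) : Set (Fin n) :=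
  I ∪ {j | ∃ i ∈ I, G.Adj i j}

/-- Iterated neighborhood `N_{G^t}(N_{G^{t+1}}(⋯ N_{G^{t+R-1}}(I) ⋯))`. -/
def iterNbhd {n : ℕ} (G : ℕ → SimpleGraph (Fin n)) (t : ℕ) :
    ℕ → Set (Fin n) → Set (Fin n)
  | 0, I => I
  | R + 1, I => nbhd (G t) (iterNbhd G (t + 1) R I)

/-- Directed effective distance: smallest `R ≥ 1` such that a message sent from `i`
at some round `t` reaches `j` after `R` rounds. -/
def effDistOne {n : ℕ} (G : ℕ → SimpleGraph (Fin n)) (i j : Fin n) : ℕ :=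
  sInf {R | 1 ≤ R ∧ ∃ t, j ∈ iterNbhd G t R {i}}

/-- Effective distance between two nodes. -/
def effDistPair {n : ℕ} (G : ℕ → SimpleGraph (Fin n)) (i j : Fin n) : ℕ :=
  max (effDistOne G i j) (effDistOne G j i)

/-- Effective distance between two disjoint sets of nodes. -/
def effDistSets {n : ℕ} (G : ℕ → SimpleGraph (Fin n)) (I1 I2 : Set (Fin n)) : ℕ :=
  sInf {m | ∃ i ∈ I1, ∃ j ∈ I2, m = effDistPair G i j}

/-!
A vertex of `C` is adjacent to every vertex of `S_{n,C}`, and a vertex outside `C` exactly to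
`C`. Hence one neighbourhood step of `S_{n,C}` adds `C` to a nonempty set disjoint from `C`, and
gives the whole vertex set as soon as the set meets `C`. Working from the innermost graph
outwards, the iterated neighbourhood of `I` collects the centres `J^{(t+R-1) mod p}, …, J^{t mod p}`,
which are new and pairwise disjoint as long as `R ≤ p`. At `R = p + 1` the outermost centre
`J^{t mod p} = J^{(t+p) mod p}` has already been collected, so the set becomes everything, and
it stays everything for larger `R`.
-/

variable {n : ℕ}

section IterNbhd

variable (G : ℕ → SimpleGraph (Fin n))

lemma nbhd_univ (H : SimpleGraph (Fin n)) : nbhd H Set.univ = Set.univ :=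
  Set.univ_subset_iff.mp Set.subset_union_left

lemma iterNbhd_univ (t R : ℕ) : iterNbhd G t R Set.univ = Set.univ := by
  induction R generalizing t with
  | zero => rfl
  | succ R ih => rw [iterNbhd, ih, nbhd_univ]

lemma iterNbhd_add (t k m : ℕ) (I : Set (Fin n)) :
    iterNbhd G t (k + m) I = iterNbhd G t k (iterNbhd G (t + k) m I) := by
  induction k generalizing t with
  | zero => rw [Nat.zero_add]; rfl
  | succ k ih =>
    rw [Nat.add_right_comm, iterNbhd, ih, iterNbhd, Nat.add_right_comm t 1 k, Nat.add_assoc]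

lemma iterNbhd_eq_univ_of_le {I : Set (Fin n)} {m : ℕ}
    (h : ∀ s, iterNbhd G s m I = Set.univ) {t R : ℕ} (hR : m ≤ R) :
    iterNbhd G t R I = Set.univ := by
  obtain ⟨k, rfl⟩ := Nat.exists_eq_add_of_le' hR
  rw [iterNbhd_add, h, iterNbhd_univ]

end IterNbhd

section SunGraph

lemma nbhd_sunGraph_of_disjoint (C : Finset (Fin n)) {I : Set (Fin n)} (hI : I.Nonempty)
    (hIC : Disjoint I C) : nbhd (sunGraph n C) I = I ∪ C := by
  refine Set.union_subset_union_right _ ?_ |>.antisymm fun j hj => ?_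
  · rintro j ⟨i, hi, -, hiC | hjC⟩
    · exact absurd hiC (Set.disjoint_left.mp hIC hi)
    · exact hjC
  · obtain ⟨i, hi⟩ := hI
    rcases hj with hj | hj
    · exact Or.inl hj
    by_cases hij : i = j
    · exact Or.inl (hij ▸ hi)
    · exact Or.inr ⟨i, hi, hij, Or.inr hj⟩

lemma nbhd_sunGraph_of_inter_nonempty (C : Finset (Fin n)) {I : Set (Fin n)}
    (h : (I ∩ C).Nonempty) : nbhd (sunGraph n C) I = Set.univ := by
  obtain ⟨i, hiI, hiC⟩ := h
  refine Set.eq_univ_of_forall fun j => ?_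
  by_cases hij : i = j
  · exact Or.inl (hij ▸ hiI)
  · exact Or.inr ⟨i, hiI, hij, Or.inl hiC⟩

theorem iterNbhd_sunGraph_of_pairwiseDisjoint (C : ℕ → Finset (Fin n)) {I : Set (Fin n)}
    (hI : I.Nonempty) (t R : ℕ) (hCI : ∀ r < R, Disjoint (C (t + r) : Set (Fin n)) I)
    (hCC : (Set.Iio R).PairwiseDisjoint fun r => (C (t + r) : Set (Fin n))) :
    iterNbhd (fun s => sunGraph n (C s)) t R I
      = (⋃ r ∈ Finset.range R, (C (t + r) : Set (Fin n))) ∪ I := by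
  induction R generalizing t with
  | zero => simp [iterNbhd]
  | succ R ih =>
    have hshift (r : ℕ) : t + 1 + r = t + (r + 1) := by omega
    have hinner := ih (t + 1) (fun r hr => hshift r ▸ hCI (r + 1) (by omega))
      (fun r hr r' hr' hne => by
        simpa only [Function.onFun, hshift] using
          hCC (Nat.succ_lt_succ hr) (Nat.succ_lt_succ hr') (by omega))
    have hnew : Disjoint ((⋃ r ∈ Finset.range R, (C (t + 1 + r) : Set (Fin n))) ∪ I) (C t) := by
      refine Set.disjoint_union_left.mpr ⟨Set.disjoint_iUnion₂_left.mpr fun r hr => ?_,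
        (hCI 0 R.succ_pos).symm⟩
      rw [hshift]
      exact hCC (Nat.succ_lt_succ (Finset.mem_range.mp hr)) R.succ_pos (by omega)
    rw [iterNbhd, hinner, nbhd_sunGraph_of_disjoint _ (hI.mono Set.subset_union_right) hnew]
    simp only [Finset.mem_range, Set.biUnion_lt_succ', hshift, Nat.add_zero]
    rw [Set.union_right_comm, Set.union_comm _ (C t : Set (Fin n))]

end SunGraph

lemma pairwiseDisjoint_add_mod {α : Type*} (J : ℕ → Finset α) {p : ℕ}
    (hJdisj : ∀ q < p, ∀ q' < p, q ≠ q' → Disjoint (J q) (J q')) (t : ℕ) {R : ℕ} (hR : R ≤ p) :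
    (Set.Iio R).PairwiseDisjoint fun r => (J ((t + r) % p) : Set α) := by
  intro r (hr : r < R) r' (hr' : r' < R) hne
  refine Finset.disjoint_coe.mpr (hJdisj _ (Nat.mod_lt _ (by omega)) _ (Nat.mod_lt _ (by omega))
    fun h => hne ?_)
  exact Nat.ModEq.eq_of_lt_of_lt (Nat.ModEq.add_left_cancel' t h) (by omega) (by omega)

theorem iterNbhd_rotating_sunGraph_general (n : ℕ)
    (I : Finset (Fin n)) (hI : I.Nonempty)
    (p : ℕ) (hp : 1 ≤ p)
    (J : ℕ → Finset (Fin n))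
    (hJne : ∀ q < p, (J q).Nonempty)
    (hJsub : ∀ q < p, J q ⊆ Iᶜ)
    (hJdisj : ∀ q < p, ∀ q' < p, q ≠ q' → Disjoint (J q) (J q')) :
    ∀ (t R : ℕ), 1 ≤ R →
      (R ≤ p →
        iterNbhd (fun s => sunGraph n (J (s % p))) t R ↑I
          = (⋃ r ∈ Finset.range R, (↑(J ((t + r) % p)) : Set (Fin n))) ∪ ↑I) ∧
      (p + 1 ≤ R →
        iterNbhd (fun s => sunGraph n (J (s % p))) t R ↑I = Set.univ) := by
  have hcollect (t R : ℕ) (hR : R ≤ p) :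
      iterNbhd (fun s => sunGraph n (J (s % p))) t R ↑I
        = (⋃ r ∈ Finset.range R, (↑(J ((t + r) % p)) : Set (Fin n))) ∪ ↑I :=
    iterNbhd_sunGraph_of_pairwiseDisjoint (fun s => J (s % p)) (Finset.coe_nonempty.mpr hI) t R
      (fun r hr => Finset.disjoint_coe.mpr <|
        Finset.subset_compl_iff_disjoint_right.mp (hJsub _ (Nat.mod_lt _ (by omega))))
      (pairwiseDisjoint_add_mod J hJdisj t hR)
  have hfull (s : ℕ) : iterNbhd (fun s => sunGraph n (J (s % p))) s (p + 1) ↑I = Set.univ := by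
    obtain ⟨i, hi⟩ := hJne (s % p) (Nat.mod_lt _ hp)
    have hlast : s + 1 + (p - 1) = s + p := by omega
    rw [iterNbhd, hcollect (s + 1) p le_rfl]
    refine nbhd_sunGraph_of_inter_nonempty _ ⟨i, Or.inl (Set.mem_biUnion (x := p - 1) ?_ ?_), hi⟩
    · exact Finset.mem_range.mpr (by omega)
    · rwa [Finset.mem_coe, hlast, Nat.add_mod_right]
  intro t R _
  exact ⟨hcollect t R, fun hR => iterNbhd_eq_univ_of_le _ hfull hR⟩

/-- iterated neighborhoods of the rotating sun-shaped graph sequence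
`G t = S_{n, J (t % p)}`: for a nonempty `I` disjoint from the pairwise disjoint
nonempty center sets `J 0, …, J (p-1)`, the `R`-step iterated neighborhood of `I`
starting at round `t` equals `(⋃_{r < R} J ((t+r) % p)) ∪ I` when `1 ≤ R ≤ p`, and
equals the whole vertex set when `R ≥ p + 1`. -/
theorem iterNbhd_rotating_sunGraph (n : ℕ) (hn : 2 ≤ n)
    (I : Finset (Fin n)) (hI : I.Nonempty)
    (p : ℕ) (hp : 1 ≤ p)
    (J : ℕ → Finset (Fin n))
    (hJne : ∀ q < p, (J q).Nonempty)
    (hJsub : ∀ q < p, J q ⊆ Iᶜ)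
    (hJdisj : ∀ q < p, ∀ q' < p, q ≠ q' → Disjoint (J q) (J q')) :
    ∀ (t R : ℕ), 1 ≤ R →
      (R ≤ p →
        iterNbhd (fun s => sunGraph n (J (s % p))) t R ↑I
          = (⋃ r ∈ Finset.range R, (↑(J ((t + r) % p)) : Set (Fin n))) ∪ ↑I) ∧
      (p + 1 ≤ R →
        iterNbhd (fun s => sunGraph n (J (s % p))) t R ↑I = Set.univ) :=
  iterNbhd_rotating_sunGraph_general n I hI p hp J hJne hJsub hJdisj

end
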